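/- arXiv:1103.5953 — 6 statements merged into one kernel-verified Lean document; each statement's English description precedes it below -/
import Mathlib

section
/- Let φ: [0,1] → ℝ with φ(0) = φ(1) = 0, and define C_θ(u,v) = uv + θ·φ(u)·φ(v). Then C_θ satisfies the 2-increasing property (P3) for all θ ∈ [-1,1] if and only if φ satisfies the Lipschitz condition |φ(x) - φ(y)| ≤ |x - y| for all x, y ∈ [0,1]. -/
open Set

theorem stmt0 (φ : ℝ → ℝ) (h0 : φ 0 = 0) (h1 : φ 1 = 0) :
    (∀ θ ∈ Icc (-1 : ℝ) 1, ∀ u₁ ∈ Icc (0:ℝ) 1, ∀ u₂ ∈ Icc (0:ℝ) 1,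
      ∀ v₁ ∈ Icc (0:ℝ) 1, ∀ v₂ ∈ Icc (0:ℝ) 1, u₁ ≤ u₂ → v₁ ≤ v₂ →
        (u₂ * v₂ + θ * φ u₂ * φ v₂) - (u₂ * v₁ + θ * φ u₂ * φ v₁)
          - (u₁ * v₂ + θ * φ u₁ * φ v₂) + (u₁ * v₁ + θ * φ u₁ * φ v₁) ≥ 0)
    ↔ (∀ x ∈ Icc (0:ℝ) 1, ∀ y ∈ Icc (0:ℝ) 1, |φ x - φ y| ≤ |x - y|) := by
  constructor
  · intro H x hx y hy
    -- WLOG x ≤ y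
    wlog hxy : x ≤ y with W
    · rw [abs_sub_comm (φ x), abs_sub_comm x]
      exact W φ h0 h1 H y hy x hx (le_of_not_ge hxy)
    have key := H (-1) (by constructor <;> norm_num) x hx y hy x hx y hy hxy hxy
    have hsq : (φ y - φ x) ^ 2 ≤ (y - x) ^ 2 := by nlinarith
    have h1' : |φ x - φ y| ^ 2 ≤ |x - y| ^ 2 := by
      rw [sq_abs, sq_abs]; nlinarith
    nlinarith [abs_nonneg (φ x - φ y), abs_nonneg (x - y)]
  · intro H θ hθ u₁ hu₁ u₂ hu₂ v₁ hv₁ v₂ hv₂ huu hvv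
    have hu := H u₂ hu₂ u₁ hu₁
    have hv := H v₂ hv₂ v₁ hv₁
    rw [abs_of_nonneg (by linarith : (0:ℝ) ≤ u₂ - u₁)] at hu
    rw [abs_of_nonneg (by linarith : (0:ℝ) ≤ v₂ - v₁)] at hv
    have hθ1 : |θ| ≤ 1 := abs_le.mpr ⟨hθ.1, hθ.2⟩
    have hb : |θ * (φ u₂ - φ u₁) * (φ v₂ - φ v₁)| ≤ (u₂ - u₁) * (v₂ - v₁) := by
      rw [abs_mul, abs_mul]
      calc |θ| * |φ u₂ - φ u₁| * |φ v₂ - φ v₁|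
          ≤ 1 * (u₂ - u₁) * (v₂ - v₁) := by
            apply mul_le_mul (mul_le_mul hθ1 hu (abs_nonneg _) (by norm_num)) hv
              (abs_nonneg _)
            linarith
        _ = (u₂ - u₁) * (v₂ - v₁) := by ring
    have := neg_abs_le (θ * (φ u₂ - φ u₁) * (φ v₂ - φ v₁))
    nlinarith
end

section
/- Let φ: [0,1] → ℝ be 1-Lipschitz with φ(0) = φ(1) = 0. Then for any θ ∈ [-1,1], the function C_θ(u,v) = uv + θφ(u)φ(v) is a bivariate copula: it satisfies C_θ(u,0) = C_θ(0,v) = 0, C_θ(u,1) = u, C_θ(1,v) = v, and the 2-increasing property. -/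
open Set

theorem stmt2 (φ : ℝ → ℝ)
    (hlip : ∀ x ∈ Icc (0:ℝ) 1, ∀ y ∈ Icc (0:ℝ) 1, |φ x - φ y| ≤ |x - y|)
    (h0 : φ 0 = 0) (h1 : φ 1 = 0) (θ : ℝ) (hθ : θ ∈ Icc (-1 : ℝ) 1)
    (C : ℝ → ℝ → ℝ) (hC : ∀ u v, C u v = u * v + θ * φ u * φ v) :
    (∀ u ∈ Icc (0:ℝ) 1, C u 0 = 0 ∧ C 0 u = 0) ∧
    (∀ u ∈ Icc (0:ℝ) 1, C u 1 = u ∧ C 1 u = u) ∧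
    (∀ u₁ ∈ Icc (0:ℝ) 1, ∀ u₂ ∈ Icc (0:ℝ) 1, ∀ v₁ ∈ Icc (0:ℝ) 1, ∀ v₂ ∈ Icc (0:ℝ) 1,
      u₁ ≤ u₂ → v₁ ≤ v₂ → C u₂ v₂ - C u₂ v₁ - C u₁ v₂ + C u₁ v₁ ≥ 0) := by
  refine ⟨fun u hu => ⟨by simp [hC, h0], by simp [hC, h0]⟩,
    fun u hu => ⟨by simp [hC, h1], by simp [hC, h1]⟩,
    fun u₁ hu₁ u₂ hu₂ v₁ hv₁ v₂ hv₂ hu hv => ?_⟩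
  have ha : |φ u₂ - φ u₁| ≤ u₂ - u₁ :=
    (hlip u₂ hu₂ u₁ hu₁).trans_eq (abs_of_nonneg (by linarith))
  have hb : |φ v₂ - φ v₁| ≤ v₂ - v₁ :=
    (hlip v₂ hv₂ v₁ hv₁).trans_eq (abs_of_nonneg (by linarith))
  have hθ1 : |θ| ≤ 1 := abs_le.mpr ⟨hθ.1, hθ.2⟩
  have key : |θ * (φ u₂ - φ u₁) * (φ v₂ - φ v₁)| ≤ (u₂ - u₁) * (v₂ - v₁) := by
    rw [abs_mul, abs_mul]
    calc |θ| * |φ u₂ - φ u₁| * |φ v₂ - φ v₁| ≤ 1 * (u₂ - u₁) * (v₂ - v₁) := by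
          gcongr <;> first | positivity | exact hθ1 | exact ha | exact hb | linarith
      _ = (u₂ - u₁) * (v₂ - v₁) := by ring
  have := neg_abs_le (θ * (φ u₂ - φ u₁) * (φ v₂ - φ v₁))
  simp only [hC]
  nlinarith [key, this]
end

section
/- Let φ: [0,1] → ℝ be 1-Lipschitz with φ(0) = φ(1) = 0, let θ ∈ [-1,1], and define δ_θ(u,v) = θ(φ(u)φ(v) - φ(1-u)φ(1-v)). If θ ≠ 0, then δ_θ(u,v) = 0 for all (u,v) ∈ [0,1]² if and only if either φ(u) = φ(1-u) for all u ∈ [0,1], or φ(u) = -φ(1-u) for all u ∈ [0,1]. -/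
open Set

theorem stmt6 (φ : ℝ → ℝ)
    (hlip : ∀ x ∈ Icc (0:ℝ) 1, ∀ y ∈ Icc (0:ℝ) 1, |φ x - φ y| ≤ |x - y|)
    (h0 : φ 0 = 0) (h1 : φ 1 = 0) (θ : ℝ) (hθ : θ ∈ Icc (-1 : ℝ) 1) (hθ0 : θ ≠ 0) :
    (∀ u ∈ Icc (0:ℝ) 1, ∀ v ∈ Icc (0:ℝ) 1,
        θ * (φ u * φ v - φ (1 - u) * φ (1 - v)) = 0)
    ↔ ((∀ u ∈ Icc (0:ℝ) 1, φ u = φ (1 - u)) ∨ (∀ u ∈ Icc (0:ℝ) 1, φ u = -φ (1 - u))) := by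
  constructor
  · intro h
    have key : ∀ u ∈ Icc (0:ℝ) 1, ∀ v ∈ Icc (0:ℝ) 1,
        φ u * φ v = φ (1 - u) * φ (1 - v) := by
      intro u hu v hv
      have := h u hu v hv
      have := mul_eq_zero.mp this
      rcases this with h' | h'
      · exact absurd h' hθ0
      · linarith
    by_cases hz : ∀ v ∈ Icc (0:ℝ) 1, φ v = 0
    · right
      intro u hu
      have h1u : (1 - u) ∈ Icc (0:ℝ) 1 := by
        constructor <;> [linarith [hu.2]; linarith [hu.1]]
      rw [hz u hu, hz (1 - u) h1u]; ring
    · push_neg at hz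
      obtain ⟨v₀, hv₀, hv₀ne⟩ := hz
      have hsq := key v₀ hv₀ v₀ hv₀
      have : φ (1 - v₀) = φ v₀ ∨ φ (1 - v₀) = -φ v₀ := by
        rcases sq_eq_sq_iff_eq_or_eq_neg.mp (by nlinarith : (φ (1 - v₀))^2 = (φ v₀)^2) with h' | h'
        · left; exact h'
        · right; exact h'
      rcases this with hc | hc
      · left
        intro u hu
        have := key u hu v₀ hv₀
        rw [hc] at this
        exact mul_right_cancel₀ hv₀ne this
      · right
        intro u hu
        have := key u hu v₀ hv₀
        rw [hc] at this
        have : φ u * φ v₀ = -φ (1 - u) * φ v₀ := by linarith [this]; 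
        have := mul_right_cancel₀ hv₀ne this
        linarith
  · intro h u hu v hv
    have h1u : (1 - u) ∈ Icc (0:ℝ) 1 := by
      constructor <;> [linarith [hu.2]; linarith [hu.1]]
    have h1v : (1 - v) ∈ Icc (0:ℝ) 1 := by
      constructor <;> [linarith [hv.2]; linarith [hv.1]]
    rcases h with h | h
    · rw [h u hu, h v hv]; ring
    · rw [h u hu, h v hv]; ring
end

section
/- Let φ: [0,1] → ℝ be 1-Lipschitz with φ(0) = φ(1) = 0, θ > 0, and C_θ(u,v) = uv + θφ(u)φ(v). Then C_θ(u,v) ≥ uv for all (u,v) ∈ [0,1]² if and only if either φ(u) ≥ 0 for all u ∈ [0,1] or φ(u) ≤ 0 for all u ∈ [0,1]. -/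
open Set

theorem stmt17 (φ : ℝ → ℝ)
    (hlip : ∀ x ∈ Icc (0:ℝ) 1, ∀ y ∈ Icc (0:ℝ) 1, |φ x - φ y| ≤ |x - y|)
    (h0 : φ 0 = 0) (h1 : φ 1 = 0) (θ : ℝ) (hθ : 0 < θ) :
    (∀ u ∈ Icc (0:ℝ) 1, ∀ v ∈ Icc (0:ℝ) 1, u * v + θ * φ u * φ v ≥ u * v)
    ↔ ((∀ u ∈ Icc (0:ℝ) 1, 0 ≤ φ u) ∨ (∀ u ∈ Icc (0:ℝ) 1, φ u ≤ 0)) := by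
  constructor
  · intro h
    by_contra hc
    push_neg at hc
    obtain ⟨⟨u, hu, hu'⟩, ⟨v, hv, hv'⟩⟩ := hc
    have := h u hu v hv
    nlinarith [mul_pos hθ hv', mul_neg_of_neg_of_pos hu' (mul_pos hθ hv')]
  · rintro (hp | hn) u hu v hv
    · nlinarith [mul_nonneg (mul_nonneg hθ.le (hp u hu)) (hp v hv)]
    · nlinarith [mul_nonneg (neg_nonneg.mpr (hn u hu)) (neg_nonneg.mpr (hn v hv)), hθ.le, mul_nonneg hθ.le (mul_nonneg (neg_nonneg.mpr (hn u hu)) (neg_nonneg.mpr (hn v hv)))]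
end

section
/- Let φ: [0,1] → ℝ be 1-Lipschitz with φ(0) = φ(1) = 0, θ > 0, and C_θ(u,v) = uv + θφ(u)φ(v). Then C_θ is totally positive of order 2 (i.e., C_θ(u₁,v₁)C_θ(u₂,v₂) ≥ C_θ(u₁,v₂)C_θ(u₂,v₁) for all u₁ ≤ u₂, v₁ ≤ v₂) if and only if u ↦ φ(u)/u is monotone on (0,1]. -/
open Set

theorem stmt18 (φ : ℝ → ℝ)
    (hlip : ∀ x ∈ Icc (0:ℝ) 1, ∀ y ∈ Icc (0:ℝ) 1, |φ x - φ y| ≤ |x - y|)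
    (h0 : φ 0 = 0) (h1 : φ 1 = 0) (θ : ℝ) (hθ : 0 < θ)
    (C : ℝ → ℝ → ℝ) (hC : ∀ u v, C u v = u * v + θ * φ u * φ v) :
    (∀ u₁ ∈ Icc (0:ℝ) 1, ∀ u₂ ∈ Icc (0:ℝ) 1, ∀ v₁ ∈ Icc (0:ℝ) 1, ∀ v₂ ∈ Icc (0:ℝ) 1,
        u₁ ≤ u₂ → v₁ ≤ v₂ → C u₁ v₂ * C u₂ v₁ ≤ C u₁ v₁ * C u₂ v₂)
    ↔ (MonotoneOn (fun u => φ u / u) (Ioc (0:ℝ) 1) ∨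
       AntitoneOn (fun u => φ u / u) (Ioc (0:ℝ) 1)) := by
  have key : ∀ u₁ u₂ v₁ v₂ : ℝ,
      C u₁ v₁ * C u₂ v₂ - C u₁ v₂ * C u₂ v₁
        = θ * ((φ u₂ * u₁ - φ u₁ * u₂) * (φ v₂ * v₁ - φ v₁ * v₂)) := by
    intro u₁ u₂ v₁ v₂; simp only [hC]; ring
  constructor
  · intro hTP
    by_contra h
    push_neg at h
    obtain ⟨hmon, hant⟩ := h
    rw [MonotoneOn] at hmon; push_neg at hmon
    obtain ⟨a, ha, b, hb, hab, hfab⟩ := hmon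
    rw [AntitoneOn] at hant; push_neg at hant
    obtain ⟨c, hc, d, hd, hcd, hfcd⟩ := hant
    have h1' := hTP a (Ioc_subset_Icc_self ha) b (Ioc_subset_Icc_self hb)
      c (Ioc_subset_Icc_self hc) d (Ioc_subset_Icc_self hd) hab hcd
    have hI := key a b c d
    have hu : φ b * a - φ a * b < 0 := by
      have := (div_lt_div_iff₀ hb.1 ha.1).mp hfab
      linarith
    have hv : 0 < φ d * c - φ c * d := by
      have := (div_lt_div_iff₀ hc.1 hd.1).mp hfcd
      linarith
    nlinarith [mul_pos hv (neg_pos.mpr hu)]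
  · intro h u₁ hu₁ u₂ hu₂ v₁ hv₁ v₂ hv₂ h12 hv12
    have hI := key u₁ u₂ v₁ v₂
    have sgn : ∀ x y : ℝ, x ∈ Icc (0:ℝ) 1 → y ∈ Icc (0:ℝ) 1 → x ≤ y →
        (MonotoneOn (fun u => φ u / u) (Ioc (0:ℝ) 1) → 0 ≤ φ y * x - φ x * y) ∧
        (AntitoneOn (fun u => φ u / u) (Ioc (0:ℝ) 1) → φ y * x - φ x * y ≤ 0) := by
      intro x y hx hy hxy
      rcases eq_or_lt_of_le hx.1 with hx0 | hx0
      · simp [← hx0, h0]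
      · have hxI : x ∈ Ioc (0:ℝ) 1 := ⟨hx0, hx.2⟩
        have hyI : y ∈ Ioc (0:ℝ) 1 := ⟨lt_of_lt_of_le hx0 hxy, hy.2⟩
        constructor
        · intro hm
          have := (div_le_div_iff₀ hx0 hyI.1).mp (hm hxI hyI hxy)
          linarith
        · intro hm
          have := (div_le_div_iff₀ hyI.1 hx0).mp (hm hxI hyI hxy)
          linarith
    have prod_nonneg : 0 ≤ (φ u₂ * u₁ - φ u₁ * u₂) * (φ v₂ * v₁ - φ v₁ * v₂) := by
      rcases h with hm | hm
      · exact mul_nonneg ((sgn u₁ u₂ hu₁ hu₂ h12).1 hm) ((sgn v₁ v₂ hv₁ hv₂ hv12).1 hm)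
      · have a1 := (sgn u₁ u₂ hu₁ hu₂ h12).2 hm
        have a2 := (sgn v₁ v₂ hv₁ hv₂ hv12).2 hm
        nlinarith
    nlinarith
end

section
/- Let φ: [0,1] → ℝ be continuously differentiable with φ(0) = φ(1) = 0, θ > 0, and c_θ(u,v) = 1 + θφ'(u)φ'(v). Then c_θ is totally positive of order 2 (i.e., c_θ(u₁,v₁)c_θ(u₂,v₂) ≥ c_θ(u₁,v₂)c_θ(u₂,v₁) for all u₁ ≤ u₂, v₁ ≤ v₂ in [0,1]) if and only if φ' is monotone, i.e., φ is either concave or convex. -/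
open Set

private lemma mul_nonneg_of_nonpos_nonpos {a b : ℝ} (ha : a ≤ 0) (hb : b ≤ 0) :
    0 ≤ a * b := by nlinarith

theorem stmt19 (φ : ℝ → ℝ) (hφ : ContDiff ℝ 1 φ) (h0 : φ 0 = 0) (h1 : φ 1 = 0)
    (θ : ℝ) (hθ : 0 < θ)
    (c : ℝ → ℝ → ℝ) (hc : ∀ u v, c u v = 1 + θ * deriv φ u * deriv φ v) :
    (∀ u₁ ∈ Icc (0:ℝ) 1, ∀ u₂ ∈ Icc (0:ℝ) 1, ∀ v₁ ∈ Icc (0:ℝ) 1, ∀ v₂ ∈ Icc (0:ℝ) 1,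
        u₁ ≤ u₂ → v₁ ≤ v₂ → c u₁ v₂ * c u₂ v₁ ≤ c u₁ v₁ * c u₂ v₂)
    ↔ (MonotoneOn (deriv φ) (Icc (0:ℝ) 1) ∨ AntitoneOn (deriv φ) (Icc (0:ℝ) 1)) := by
  set f := deriv φ with hf
  have key : ∀ u₁ u₂ v₁ v₂ : ℝ,
      c u₁ v₁ * c u₂ v₂ - c u₁ v₂ * c u₂ v₁
        = θ * ((f u₂ - f u₁) * (f v₂ - f v₁)) := by
    intro u₁ u₂ v₁ v₂
    simp only [hc]
    ring
  constructor
  · intro h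
    by_cases hmono : ∀ a ∈ Icc (0:ℝ) 1, ∀ b ∈ Icc (0:ℝ) 1, a ≤ b → f a ≤ f b
    · exact Or.inl fun a ha b hb hab => hmono a ha b hb hab
    · right
      push_neg at hmono
      obtain ⟨a, ha, b, hb, hab, hfab⟩ := hmono
      intro v₁ hv₁ v₂ hv₂ hv
      have h1 := h a ha b hb v₁ hv₁ v₂ hv₂ hab hv
      have h2 : 0 ≤ θ * ((f b - f a) * (f v₂ - f v₁)) := by
        rw [← key]; linarith
      have h3 : 0 ≤ (f b - f a) * (f v₂ - f v₁) :=
        nonneg_of_mul_nonneg_right h2 hθ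
      nlinarith [h3]
  · rintro (hm | hm) u₁ hu₁ u₂ hu₂ v₁ hv₁ v₂ hv₂ hu hv
    · have hX : 0 ≤ (f u₂ - f u₁) * (f v₂ - f v₁) :=
        mul_nonneg (sub_nonneg.2 (hm hu₁ hu₂ hu)) (sub_nonneg.2 (hm hv₁ hv₂ hv))
      have := key u₁ u₂ v₁ v₂
      nlinarith [mul_nonneg hθ.le hX]
    · have hX : 0 ≤ (f u₂ - f u₁) * (f v₂ - f v₁) :=
        mul_nonneg_of_nonpos_nonpos (sub_nonpos.2 (hm hu₁ hu₂ hu))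
          (sub_nonpos.2 (hm hv₁ hv₂ hv))
      have := key u₁ u₂ v₁ v₂
      nlinarith [mul_nonneg hθ.le hX]
end
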